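/- arXiv:1203.5841 — 5 statements merged into one kernel-verified Lean document; each statement's English description precedes it below -/
import Mathlib

section
/- If M is a finite-dimensional subspace of a complex Hilbert space V and P_M : V → M is the orthogonal projection, then the functorial extension of P_M to the symmetric algebras (the algebra map S(P_M) : SV → SM) coincides with the orthogonal projection of SV onto SM with respect to the permanent inner product. -/
open scoped BigOperators

/-- The permanent inner product on degree-`d` symmetric tensors:
`⟨x₁⋯x_d | y₁⋯y_d⟩ = Per[⟨x_a|y_b⟩]`. -/
noncomputable def permInner {V : Type*} [NormedAddCommGroup V] [InnerProductSpace ℂ V]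
    {d : ℕ} (x y : Fin d → V) : ℂ :=
  ∑ π : Equiv.Perm (Fin d), ∏ k, (inner ℂ (x k) (y (π k)) : ℂ)

theorem permInner_congr_right {V : Type*} [NormedAddCommGroup V] [InnerProductSpace ℂ V]
    {d : ℕ} {x y y' : Fin d → V} (h : ∀ k j, inner ℂ (x k) (y j) = inner ℂ (x k) (y' j)) :
    permInner x y = permInner x y' :=
  Finset.sum_congr rfl fun π _ => Finset.prod_congr rfl fun k _ => h k (π k)

/-- Since `S(P_M)` lands in `SM`, it is the orthogonal projection onto `SM` exactly when
`(P_M v₁)⋯(P_M v_d) − v₁⋯v_d` is perpendicular to every generator `w₁⋯w_d` of `S^d M`. -/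
theorem stmt4 {V : Type*} [NormedAddCommGroup V] [InnerProductSpace ℂ V]
    (M : Submodule ℂ V) [FiniteDimensional ℂ M] {d : ℕ}
    (v : Fin d → V) (w : Fin d → M) :
    permInner (fun i => (w i : V)) (fun i => (Submodule.orthogonalProjection M (v i) : V))
      = permInner (fun i => (w i : V)) v :=
  permInner_congr_right fun k j =>
    Submodule.inner_orthogonalProjectionOnto_eq_of_mem_left (w k) (v j)
end

section
/- For v ∈ V, the creation operator c(v) (multiplication by v) and the annihilation operator a(v) (the unique derivation with a(v)1 = 0 and a(v)w = <v|w> for w ∈ V) are mutually adjoint on the symmetric algebra SV: <a(v)φ | ψ> = <φ | c(v)ψ> for all φ, ψ ∈ SV. -/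
open scoped BigOperators ComplexConjugate

/-
Both sides are sesquilinear in `(φ, ψ)` and `SV` is spanned by monomials `ι x₁ ⋯ ι x_d`, so it
suffices to compare them on pairs of monomials. There the Leibniz rule expands `a(v)` of a monomial
as `∑ᵢ ⟨v|xᵢ⟩ ∏_{j ≠ i} ι xⱼ`, and the right-hand side is the permanent of the Gram matrix of
`(x, v :: y)`, whose expansion along the column of `v` is the same sum.
-/

open Finset Equiv

theorem Matrix.permanent_succ_column_zero {R : Type*} [CommSemiring R] {n : ℕ}
    (M : Matrix (Fin (n + 1)) (Fin (n + 1)) R) :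
    M.permanent = ∑ i, M i 0 * (M.submatrix i.succAbove Fin.succ).permanent := by
  rw [Matrix.permanent, univ_perm_fin_succ, ← univ_product_univ]
  simp only [sum_map, Equiv.toEmbedding_apply, sum_product]
  refine sum_congr rfl fun i _ => ?_
  -- `univ_perm_fin_succ` reindexes the other rows by `swap 0 i ∘ succ`, which differs from
  -- `i.succAbove` by the permutation `cycleRange`.
  have hrows : (M.submatrix i.succAbove Fin.succ).permanent
      = (M.submatrix (fun j => Equiv.swap 0 i j.succ) Fin.succ).permanent := by
    cases i using Fin.cases with
    | zero => simp
    | succ i =>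
      rw [← Matrix.permanent_permute_cols i.cycleRange]
      simp only [Matrix.submatrix_submatrix, Function.comp_def, Fin.succAbove_cycleRange]
      rfl
  rw [hrows, Matrix.permanent, mul_sum]
  refine sum_congr rfl fun σ _ => ?_
  simp [Fin.prod_univ_succ, Perm.decomposeFin_symm_apply_zero,
    Perm.decomposeFin_symm_apply_succ]

theorem Derivation.leibniz_prod {R A M : Type*} [CommSemiring R] [CommSemiring A]
    [AddCommMonoid M] [Algebra R A] [Module A M] [Module R M] (D : Derivation R A M)
    {ι : Type*} [DecidableEq ι] (s : Finset ι) (f : ι → A) :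
    D (∏ i ∈ s, f i) = ∑ i ∈ s, (∏ j ∈ s.erase i, f j) • D (f i) := by
  induction s using Finset.induction_on with
  | empty => simp
  | insert a s ha ih =>
    rw [prod_insert ha, leibniz, ih, sum_insert ha, erase_insert ha, smul_sum, add_comm]
    congr 1
    refine sum_congr rfl fun i hi => ?_
    rw [erase_insert_of_ne (ne_of_mem_of_not_mem hi ha).symm,
      prod_insert fun h => ha (mem_of_mem_erase h), mul_smul]

theorem Derivation.leibniz_fin_prod {R A M : Type*} [CommSemiring R] [CommSemiring A]
    [AddCommMonoid M] [Algebra R A] [Module A M] [Module R M] (D : Derivation R A M)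
    {n : ℕ} (f : Fin (n + 1) → A) :
    D (∏ i, f i) = ∑ i, (∏ j, f (i.succAbove j)) • D (f i) := by
  rw [D.leibniz_prod]
  refine sum_congr rfl fun i _ => ?_
  rw [← compl_singleton, ← Fin.image_succAbove_univ,
    prod_image fun _ _ _ _ h => Fin.succAbove_right_injective h]

theorem span_range_prod_eq_top_of_adjoin_eq_top {R A X : Type*} [CommSemiring R] [CommSemiring A]
    [Algebra R A] (f : X → A) (hf : Algebra.adjoin R (Set.range f) = ⊤) :
    Submodule.span R (Set.range fun x : Σ d, Fin d → X => ∏ i, f (x.2 i)) = ⊤ := by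
  rw [eq_top_iff, ← Algebra.top_toSubmodule, ← hf, Algebra.adjoin_eq_span]
  refine Submodule.span_mono fun p hp => ?_
  induction hp using Submonoid.closure_induction with
  | mem p hp =>
    obtain ⟨w, rfl⟩ := hp
    exact ⟨⟨1, fun _ => w⟩, by simp⟩
  | one => exact ⟨⟨0, Fin.elim0⟩, by simp⟩
  | mul p q _ _ hp hq =>
    obtain ⟨⟨d, x⟩, rfl⟩ := hp
    obtain ⟨⟨e, y⟩, rfl⟩ := hq
    exact ⟨⟨d + e, Fin.append x y⟩, by simp [Fin.prod_univ_add]⟩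

section
variable {V : Type*} [NormedAddCommGroup V] [InnerProductSpace ℂ V]

theorem permInner_eq_permanent {d : ℕ} (x y : Fin d → V) :
    permInner x y = (Matrix.of fun i j => inner ℂ (x i) (y j)).permanent := by
  rw [← Matrix.permanent_transpose]
  rfl

theorem permInner_cons_right {n : ℕ} (x : Fin (n + 1) → V) (v : V) (y : Fin n → V) :
    permInner x (Fin.cons v y) =
      ∑ i, inner ℂ (x i) v * permInner (fun j => x (i.succAbove j)) y := by
  rw [permInner_eq_permanent, Matrix.permanent_succ_column_zero]
  simp only [permInner_eq_permanent, Matrix.of_apply, Fin.cons_zero]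
  rfl

variable {A : Type*} [CommRing A] [Algebra ℂ A] (ι : V →ₗ[ℂ] A) (B : A →ₗ⋆[ℂ] A →ₗ[ℂ] ℂ)

theorem apply_derivation_prod_eq_apply_prod_mul
    (hBperm : ∀ {d : ℕ} (x y : Fin d → V),
      B (∏ i, ι (x i)) (∏ i, ι (y i)) = permInner x y)
    (hBorth : ∀ {d e : ℕ}, d ≠ e → ∀ (x : Fin d → V) (y : Fin e → V),
      B (∏ i, ι (x i)) (∏ i, ι (y i)) = 0)
    {v : V} (D : Derivation ℂ A A) (hD : ∀ w, D (ι w) = inner ℂ v w • (1 : A))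
    {d e : ℕ} (x : Fin d → V) (y : Fin e → V) :
    B (D (∏ i, ι (x i))) (∏ i, ι (y i)) = B (∏ i, ι (x i)) (ι v * ∏ i, ι (y i)) := by
  have hcons : ι v * ∏ i, ι (y i) = ∏ i, ι ((Fin.cons v y : Fin (e + 1) → V) i) := by
    simp [Fin.prod_univ_succ]
  rw [hcons]
  cases d with
  | zero =>
    rw [hBorth (by omega) x, Fin.prod_univ_zero, D.map_one_eq_zero, map_zero,
      LinearMap.zero_apply]
  | succ n =>
    have hDx : D (∏ i, ι (x i)) = ∑ i, inner ℂ v (x i) • ∏ j, ι (x (i.succAbove j)) := by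
      simp [D.leibniz_fin_prod, hD]
    rw [hDx, map_sum, LinearMap.sum_apply]
    obtain rfl | hne := eq_or_ne n e
    · rw [hBperm, permInner_cons_right]
      refine sum_congr rfl fun i _ => ?_
      rw [LinearMap.map_smulₛₗ, LinearMap.smul_apply, hBperm, inner_conj_symm, smul_eq_mul]
    · rw [hBorth (by omega)]
      refine sum_eq_zero fun i _ => ?_
      rw [LinearMap.map_smulₛₗ, LinearMap.smul_apply, hBorth hne, smul_zero]

end

theorem stmt5_general {V : Type*} [NormedAddCommGroup V] [InnerProductSpace ℂ V]
    {A : Type*} [CommRing A] [Algebra ℂ A] (ι : V →ₗ[ℂ] A)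
    (hgen : Algebra.adjoin ℂ (Set.range ι) = ⊤)
    (B : A →ₗ⋆[ℂ] A →ₗ[ℂ] ℂ)
    (hBperm : ∀ {d : ℕ} (x y : Fin d → V),
      B (∏ i, ι (x i)) (∏ i, ι (y i)) = permInner x y)
    (hBorth : ∀ {d e : ℕ}, d ≠ e → ∀ (x : Fin d → V) (y : Fin e → V),
      B (∏ i, ι (x i)) (∏ i, ι (y i)) = 0)
    (a : V → A →ₗ[ℂ] A)
    (haι : ∀ v w, a v (ι w) = (inner ℂ v w : ℂ) • (1 : A))
    (haDer : ∀ v p q, a v (p * q) = a v p * q + p * a v q) :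
    ∀ (v : V) (φ ψ : A), B (a v φ) ψ = B φ (ι v * ψ) := by
  intro v φ ψ
  let D : Derivation ℂ A A := Derivation.mk' (a v) fun p q => by
    rw [haDer, smul_eq_mul, smul_eq_mul, mul_comm q, add_comm]
  have hspan := span_range_prod_eq_top_of_adjoin_eq_top ι hgen
  have hB : B.comp (a v) = B.compl₂ (LinearMap.mulLeft ℂ (ι v)) :=
    LinearMap.ext_on_range hspan fun x => LinearMap.ext_on_range hspan fun y =>
      apply_derivation_prod_eq_apply_prod_mul ι B hBperm hBorth D (haι v) x.2 y.2
  exact LinearMap.congr_fun₂ hB φ ψ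

/-- Mutual adjointness of creators and annihilators on the symmetric algebra.  The symmetric
algebra `SV` is modelled by a commutative ℂ-algebra `A` generated by the image of a linear map
`ι : V →ₗ[ℂ] A`, equipped with the sesquilinear permanent inner product `B` (homogeneous
components of different degrees being orthogonal).  The creator `c(v)` is multiplication by
`ι v`, and `a v` is the derivation with `a v 1 = 0` and `a v (ι w) = ⟨v|w⟩·1`.  Then for all
`φ, ψ ∈ SV`:  `⟨a(v)φ | ψ⟩ = ⟨φ | c(v)ψ⟩`. -/
theorem stmt5 {V : Type*} [NormedAddCommGroup V] [InnerProductSpace ℂ V]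
    {A : Type*} [CommRing A] [Algebra ℂ A] (ι : V →ₗ[ℂ] A)
    (hgen : Algebra.adjoin ℂ (Set.range ι) = ⊤)
    (B : A →ₗ⋆[ℂ] A →ₗ[ℂ] ℂ)
    (hBperm : ∀ {d : ℕ} (x y : Fin d → V),
      B (∏ i, ι (x i)) (∏ i, ι (y i)) = permInner x y)
    (hBorth : ∀ {d e : ℕ}, d ≠ e → ∀ (x : Fin d → V) (y : Fin e → V),
      B (∏ i, ι (x i)) (∏ i, ι (y i)) = 0)
    (a : V → A →ₗ[ℂ] A)
    (ha1 : ∀ v, a v 1 = 0)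
    (haι : ∀ v w, a v (ι w) = (inner ℂ v w : ℂ) • (1 : A))
    (haDer : ∀ v p q, a v (p * q) = a v p * q + p * a v q) :
    ∀ (v : V) (φ ψ : A), B (a v φ) ψ = B φ (ι v * ψ) :=
  stmt5_general ι hgen B hBperm hBorth a haι haDer
end

section
/- Let v ∈ V, a, b ∈ ℕ, and φ an element of the degree-b component S^b V of the symmetric algebra. Then ‖v^a φ‖² ≤ ((a+b)!/(a!·b!)) · ‖v^a‖² · ‖φ‖² in the permanent inner product. -/
open scoped BigOperators ComplexConjugate

/-!
Choose an orthonormal basis `e₁, …, e_N` of a finite-dimensional subspace containing `v` and all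
vectors occurring in `φ`. A monomial `u₁ ⋯ u_d` then has the coordinate tensor `u₁ ⊗ ⋯ ⊗ u_d` in
`ℂ^(N^d)`, and with `S` the sum of the `d!` permutations of tensor factors the permanent inner
product becomes `⟪ψ, ψ⟫ = ⟪F, S F⟫ = ‖S F‖² / d!` for the coordinate tensor `F` of `ψ`.
Multiplication by `v` becomes `F ↦ g ⊗ F`, where `g` are the coordinates of `v`, and
`S (g ⊗ S F) = d! • S (g ⊗ F)`; since `S` is a sum of `(d+1)!` isometries, this gives
`‖S (g ⊗ F)‖ ≤ (d+1) ‖v‖ ‖S F‖`, i.e. `‖v φ‖² ≤ (d+1) ‖v‖² ‖φ‖²`. Iterating `a` times and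
using `‖v^a‖² = a! ‖v‖^(2a)` gives the bound.
-/

open scoped InnerProductSpace
open Finset

noncomputable section

lemma exists_coords_inner_eq {V : Type*} [NormedAddCommGroup V] [InnerProductSpace ℂ V]
    {s : Set V} (hs : s.Finite) :
    ∃ (N : ℕ) (f : V → EuclideanSpace ℂ (Fin N)), ∀ x ∈ s, ∀ y ∈ s, ⟪f x, f y⟫_ℂ = ⟪x, y⟫_ℂ := by
  let E := Submodule.span ℂ s
  have : FiniteDimensional ℂ E := FiniteDimensional.span_of_finite ℂ hs
  let b := stdOrthonormalBasis ℂ E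
  refine ⟨_, fun x => WithLp.toLp 2 fun i => ⟪(b i : V), x⟫_ℂ, fun x hx y hy => ?_⟩
  have := b.sum_inner_mul_inner ⟨x, Submodule.subset_span hx⟩ ⟨y, Submodule.subset_span hy⟩
  simpa [PiLp.inner_apply, mul_comm] using this

namespace SymmetricTensor

variable {κ n : Type*}

section Symmetrize

variable [Fintype κ] [DecidableEq κ] [Fintype n]

def permuteFactors (π : Equiv.Perm κ) :
    EuclideanSpace ℂ (κ → n) ≃ₗᵢ[ℂ] EuclideanSpace ℂ (κ → n) :=
  LinearIsometryEquiv.piLpCongrLeft 2 ℂ ℂ (Equiv.arrowCongr π (Equiv.refl n))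

@[simp]
lemma permuteFactors_apply (π : Equiv.Perm κ) (F : EuclideanSpace ℂ (κ → n)) (t : κ → n) :
    permuteFactors π F t = F (t ∘ π) :=
  rfl

lemma permuteFactors_mul (π σ : Equiv.Perm κ) (F : EuclideanSpace ℂ (κ → n)) :
    permuteFactors (π * σ) F = permuteFactors π (permuteFactors σ F) :=
  rfl

def symmetrize : EuclideanSpace ℂ (κ → n) →ₗ[ℂ] EuclideanSpace ℂ (κ → n) :=
  ∑ π : Equiv.Perm κ, (permuteFactors π).toLinearEquiv.toLinearMap

lemma symmetrize_apply (F : EuclideanSpace ℂ (κ → n)) :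
    symmetrize F = ∑ π : Equiv.Perm κ, permuteFactors π F := by
  simp [symmetrize]

lemma symmetrize_permuteFactors (σ : Equiv.Perm κ) (F : EuclideanSpace ℂ (κ → n)) :
    symmetrize (permuteFactors σ F) = symmetrize F := by
  simp only [symmetrize_apply, ← permuteFactors_mul]
  exact Fintype.sum_equiv (Equiv.mulRight σ) _ _ fun _ => rfl

lemma permuteFactors_symmetrize (σ : Equiv.Perm κ) (F : EuclideanSpace ℂ (κ → n)) :
    permuteFactors σ (symmetrize F) = symmetrize F := by
  simp only [symmetrize_apply, map_sum, ← permuteFactors_mul]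
  exact Fintype.sum_equiv (Equiv.mulLeft σ) _ _ fun _ => rfl

lemma card_mul_re_inner_symmetrize (F : EuclideanSpace ℂ (κ → n)) :
    (Fintype.card (Equiv.Perm κ) : ℝ) * (⟪F, symmetrize F⟫_ℂ).re = ‖symmetrize F‖ ^ 2 := by
  have hrow : ∀ σ : Equiv.Perm κ,
      ⟪permuteFactors σ F, symmetrize F⟫_ℂ = ⟪F, symmetrize F⟫_ℂ := fun σ => by
    conv_lhs => rw [← permuteFactors_symmetrize σ F]
    exact LinearIsometryEquiv.inner_map_map _ _ _
  rw [@norm_sq_eq_re_inner ℂ, symmetrize_apply F, sum_inner, ← symmetrize_apply]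
  simp [hrow]

lemma norm_symmetrize_le (F : EuclideanSpace ℂ (κ → n)) :
    ‖symmetrize F‖ ≤ Fintype.card (Equiv.Perm κ) * ‖F‖ := by
  rw [symmetrize_apply]
  refine (norm_sum_le _ _).trans_eq ?_
  simp

end Symmetrize

section Coordinates

variable {V : Type*} [Fintype κ]

def tensorCoord (f : V → EuclideanSpace ℂ n) (x : κ → V) : EuclideanSpace ℂ (κ → n) :=
  WithLp.toLp 2 fun t => ∏ i, f (x i) (t i)

lemma inner_tensorCoord [DecidableEq κ] [Fintype n] (f : V → EuclideanSpace ℂ n) (x y : κ → V) :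
    ⟪tensorCoord f x, tensorCoord f y⟫_ℂ = ∏ i, ⟪f (x i), f (y i)⟫_ℂ := by
  simp only [tensorCoord, PiLp.inner_apply, RCLike.inner_apply, Fintype.prod_sum, map_prod,
    prod_mul_distrib]

lemma tensorCoord_comp_perm [DecidableEq κ] [Fintype n] (f : V → EuclideanSpace ℂ n) (x : κ → V)
    (π : Equiv.Perm κ) : tensorCoord f (x ∘ π) = permuteFactors π⁻¹ (tensorCoord f x) := by
  ext t
  simp only [tensorCoord, permuteFactors_apply, Function.comp_apply]
  conv_rhs => rw [← Equiv.prod_comp π]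
  simp

lemma permInner_eq_inner_symmetrize [Fintype n] [NormedAddCommGroup V] [InnerProductSpace ℂ V]
    (f : V → EuclideanSpace ℂ n) {d : ℕ} (x y : Fin d → V)
    (hf : ∀ i j, ⟪f (x i), f (y j)⟫_ℂ = ⟪x i, y j⟫_ℂ) :
    permInner x y = ⟪tensorCoord f x, symmetrize (tensorCoord f y)⟫_ℂ := by
  rw [symmetrize_apply, inner_sum, permInner]
  refine Fintype.sum_equiv (Equiv.inv _) _ _ fun π => ?_
  rw [Equiv.inv_apply, ← tensorCoord_comp_perm, inner_tensorCoord]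
  simp [hf]

end Coordinates

section Cons

def tensorCons {d : ℕ} (g : EuclideanSpace ℂ n) :
    EuclideanSpace ℂ (Fin d → n) →ₗ[ℂ] EuclideanSpace ℂ (Fin (d + 1) → n) where
  toFun F := WithLp.toLp 2 fun t => g (t 0) * F (Fin.tail t)
  map_add' F G := by ext t; simp [mul_add]
  map_smul' c F := by ext t; simp [mul_left_comm]

lemma tensorCons_apply {d : ℕ} (g : EuclideanSpace ℂ n) (F : EuclideanSpace ℂ (Fin d → n))
    (t : Fin (d + 1) → n) : tensorCons g F t = g (t 0) * F (Fin.tail t) :=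
  rfl

lemma tensorCoord_cons {V : Type*} (f : V → EuclideanSpace ℂ n) {d : ℕ} (v : V) (x : Fin d → V) :
    tensorCoord f (Fin.cons v x : Fin (d + 1) → V) = tensorCons (f v) (tensorCoord f x) := by
  ext t
  simp [tensorCoord, tensorCons_apply, Fin.prod_univ_succ, Fin.tail]

variable [Fintype n]

lemma norm_tensorCons {d : ℕ} (g : EuclideanSpace ℂ n) (F : EuclideanSpace ℂ (Fin d → n)) :
    ‖tensorCons g F‖ = ‖g‖ * ‖F‖ := by
  refine (sq_eq_sq₀ (norm_nonneg _) (by positivity)).1 ?_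
  simp only [EuclideanSpace.norm_sq_eq, mul_pow, tensorCons_apply, norm_mul, sum_mul_sum]
  rw [← Fintype.sum_prod_type']
  exact (Fintype.sum_equiv (Fin.consEquiv fun _ => n) _ _ fun p => by simp [Fin.consEquiv]).symm

lemma tensorCons_permuteFactors {d : ℕ} (g : EuclideanSpace ℂ n) (σ : Equiv.Perm (Fin d))
    (F : EuclideanSpace ℂ (Fin d → n)) :
    tensorCons g (permuteFactors σ F) =
      permuteFactors (Equiv.Perm.decomposeFin.symm (0, σ)) (tensorCons g F) := by
  ext t
  simp [tensorCons_apply, Fin.tail_def, Function.comp_def]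

lemma norm_symmetrize_tensorCons_le {d : ℕ} (g : EuclideanSpace ℂ n)
    (F : EuclideanSpace ℂ (Fin d → n)) :
    ‖symmetrize (tensorCons g F)‖ ≤ (d + 1) * ‖g‖ * ‖symmetrize F‖ := by
  have hsym : symmetrize (tensorCons g (symmetrize F)) =
      (d.factorial : ℂ) • symmetrize (tensorCons g F) := by
    simp [symmetrize_apply F, map_sum, tensorCons_permuteFactors, symmetrize_permuteFactors,
      ← Nat.cast_smul_eq_nsmul ℂ, Fintype.card_perm]
  have hle := norm_symmetrize_le (tensorCons g (symmetrize F))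
  rw [hsym, norm_smul, norm_tensorCons, Fintype.card_perm, Fintype.card_fin,
    Nat.factorial_succ, Complex.norm_natCast] at hle
  push_cast at hle
  exact le_of_mul_le_mul_left (hle.trans_eq (by ring)) (by positivity)

end Cons

end SymmetricTensor

open SymmetricTensor

section PermanentForm

variable {V : Type*} [NormedAddCommGroup V] [InnerProductSpace ℂ V]
  {A : Type*} [CommRing A] [Algebra ℂ A]

def monomialSpan (ι : V →ₗ[ℂ] A) (d : ℕ) : Submodule ℂ A :=
  Submodule.span ℂ {x : A | ∃ u : Fin d → V, x = ∏ i, ι (u i)}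

def IsPermanentForm (ι : V →ₗ[ℂ] A) (B : A →ₗ⋆[ℂ] A →ₗ[ℂ] ℂ) : Prop :=
  ∀ {d : ℕ} (x y : Fin d → V), B (∏ i, ι (x i)) (∏ i, ι (y i)) = permInner x y

lemma exists_eq_sum_monomials {ι : V →ₗ[ℂ] A} {d : ℕ} {φ : A} (hφ : φ ∈ monomialSpan ι d) :
    ∃ (m : ℕ) (c : Fin m → ℂ) (u : Fin m → Fin d → V), φ = ∑ j, c j • ∏ i, ι (u j i) := by
  obtain ⟨m, c, g, hg⟩ := Submodule.mem_span_set'.1 hφ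
  choose u hu using fun j => (g j).2
  exact ⟨m, c, u, by simp_rw [← hg, ← hu]⟩

lemma mul_mem_monomialSpan {ι : V →ₗ[ℂ] A} {d : ℕ} (v : V) {φ : A}
    (hφ : φ ∈ monomialSpan ι d) : ι v * φ ∈ monomialSpan ι (d + 1) := by
  induction hφ using Submodule.span_induction with
  | mem x hx =>
    obtain ⟨u, rfl⟩ := hx
    exact Submodule.subset_span ⟨Fin.cons v u, by simp [Fin.prod_univ_succ]⟩
  | zero => simp
  | add x y _ _ hx hy => simpa [mul_add] using add_mem hx hy
  | smul c x _ hx => simpa [mul_smul_comm] using Submodule.smul_mem _ c hx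

lemma factorial_mul_re_apply_sum_monomials {ι : V →ₗ[ℂ] A} {B : A →ₗ⋆[ℂ] A →ₗ[ℂ] ℂ}
    (hB : IsPermanentForm ι B) {m : Type*} [Fintype m] {d N : ℕ} (c : m → ℂ)
    (u : m → Fin d → V) {s : Set V} (hu : ∀ j i, u j i ∈ s) (f : V → EuclideanSpace ℂ (Fin N))
    (hf : ∀ x ∈ s, ∀ y ∈ s, ⟪f x, f y⟫_ℂ = ⟪x, y⟫_ℂ) :
    (d.factorial : ℝ) * (B (∑ j, c j • ∏ i, ι (u j i)) (∑ j, c j • ∏ i, ι (u j i))).re =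
      ‖symmetrize (∑ j, c j • tensorCoord f (u j))‖ ^ 2 := by
  have hentry : ∀ j k, B (∏ i, ι (u j i)) (∏ i, ι (u k i)) =
      ⟪tensorCoord f (u j), symmetrize (tensorCoord f (u k))⟫_ℂ := fun j k =>
    (hB _ _).trans (permInner_eq_inner_symmetrize f _ _ fun i l => hf _ (hu j i) _ (hu k l))
  rw [← card_mul_re_inner_symmetrize, Fintype.card_perm, Fintype.card_fin]
  congr 2
  simp [hentry, mul_comm]

lemma re_apply_mul_self_le {ι : V →ₗ[ℂ] A} {B : A →ₗ⋆[ℂ] A →ₗ[ℂ] ℂ}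
    (hB : IsPermanentForm ι B) (v : V) {d : ℕ} {φ : A} (hφ : φ ∈ monomialSpan ι d) :
    (B (ι v * φ) (ι v * φ)).re ≤ (d + 1) * ‖v‖ ^ 2 * (B φ φ).re := by
  obtain ⟨m, c, u, rfl⟩ := exists_eq_sum_monomials hφ
  set s : Set V := insert v (Set.range fun p : Fin m × Fin d => u p.1 p.2)
  obtain ⟨N, f, hf⟩ := exists_coords_inner_eq (s := s) ((Set.finite_range _).insert v)
  have hu : ∀ j i, u j i ∈ s := fun j i => Set.mem_insert_of_mem _ ⟨(j, i), rfl⟩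
  have hvu : ∀ j i, (Fin.cons v (u j) : Fin (d + 1) → V) i ∈ s := fun j =>
    Fin.cases (Set.mem_insert v _) (hu j)
  have hvφ : ι v * ∑ j, c j • ∏ i, ι (u j i) =
      ∑ j, c j • ∏ i, ι ((Fin.cons v (u j) : Fin (d + 1) → V) i) := by
    simp [Finset.mul_sum, Fin.prod_univ_succ]
  set F := ∑ j, c j • tensorCoord f (u j)
  have hF : ∑ j, c j • tensorCoord f (Fin.cons v (u j) : Fin (d + 1) → V) =
      tensorCons (f v) F := by
    simp [F, tensorCoord_cons, map_sum]
  have hfv : ‖f v‖ = ‖v‖ := by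
    have h := hf v (Set.mem_insert v _) v (Set.mem_insert v _)
    rw [inner_self_eq_norm_sq_to_K, inner_self_eq_norm_sq_to_K] at h
    exact (sq_eq_sq₀ (norm_nonneg _) (norm_nonneg _)).1 (by exact_mod_cast h)
  have hφF : (d.factorial : ℝ) * (B (∑ j, c j • ∏ i, ι (u j i)) (∑ j, c j • ∏ i, ι (u j i))).re
      = ‖symmetrize F‖ ^ 2 := factorial_mul_re_apply_sum_monomials hB c u hu f hf
  have hvφF := factorial_mul_re_apply_sum_monomials hB c _ hvu f hf
  rw [hF, ← hvφ, Nat.factorial_succ] at hvφF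
  push_cast at hvφF
  have hnorm := pow_le_pow_left₀ (norm_nonneg _) (norm_symmetrize_tensorCons_le (f v) F) 2
  rw [hfv] at hnorm
  refine le_of_mul_le_mul_left ?_ (by positivity : (0 : ℝ) < (d + 1) * d.factorial)
  calc _ = _ := hvφF
    _ ≤ _ := hnorm
    _ = _ := by rw [mul_pow, ← hφF]; ring

lemma factorial_mul_re_apply_pow_mul_le {ι : V →ₗ[ℂ] A} {B : A →ₗ⋆[ℂ] A →ₗ[ℂ] ℂ}
    (hB : IsPermanentForm ι B) (v : V) (a : ℕ) {b : ℕ} {φ : A} (hφ : φ ∈ monomialSpan ι b) :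
    (b.factorial : ℝ) * (B (ι v ^ a * φ) (ι v ^ a * φ)).re ≤
      (a + b).factorial * (‖v‖ ^ 2) ^ a * (B φ φ).re := by
  induction a generalizing b φ with
  | zero => simp
  | succ a ih =>
    have hvφ := ih (mul_mem_monomialSpan v hφ)
    rw [← mul_assoc, ← pow_succ] at hvφ
    refine le_of_mul_le_mul_left ?_ (Nat.cast_add_one_pos b)
    calc ((b : ℝ) + 1) * (b.factorial * (B (ι v ^ (a + 1) * φ) (ι v ^ (a + 1) * φ)).re)
        = (b + 1).factorial * (B (ι v ^ (a + 1) * φ) (ι v ^ (a + 1) * φ)).re := by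
          push_cast [Nat.factorial_succ]; ring
      _ ≤ (a + (b + 1)).factorial * (‖v‖ ^ 2) ^ a * (B (ι v * φ) (ι v * φ)).re := hvφ
      _ ≤ (a + (b + 1)).factorial * (‖v‖ ^ 2) ^ a * ((b + 1) * ‖v‖ ^ 2 * (B φ φ).re) := by
          gcongr
          exact re_apply_mul_self_le hB v hφ
      _ = (b + 1) * ((a + 1 + b).factorial * (‖v‖ ^ 2) ^ (a + 1) * (B φ φ).re) := by
          rw [show a + (b + 1) = a + 1 + b by omega]; ring

lemma re_apply_pow_self {ι : V →ₗ[ℂ] A} {B : A →ₗ⋆[ℂ] A →ₗ[ℂ] ℂ}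
    (hB : IsPermanentForm ι B) (v : V) (a : ℕ) :
    (B (ι v ^ a) (ι v ^ a)).re = a.factorial * (‖v‖ ^ 2) ^ a := by
  have hprod : ι v ^ a = ∏ _i : Fin a, ι v := by simp
  rw [hprod, hB (fun _ => v) (fun _ => v)]
  simp [permInner, inner_self_eq_norm_sq_to_K, Fintype.card_perm]
  norm_cast
  simp

end PermanentForm

end

/-- Let `v ∈ V`, `a b ∈ ℕ`, and `φ ∈ S^b V` (an element of the span of degree-`b` monomials
in the symmetric algebra, modelled by a commutative ℂ-algebra `A` with inclusion
`ι : V →ₗ[ℂ] A` carrying the sesquilinear permanent inner product `B`).  Then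
`‖v^a φ‖² ≤ ((a+b)!/(a!·b!)) · ‖v^a‖² · ‖φ‖²`. -/
theorem stmt8 {V : Type*} [NormedAddCommGroup V] [InnerProductSpace ℂ V]
    {A : Type*} [CommRing A] [Algebra ℂ A] (ι : V →ₗ[ℂ] A)
    (B : A →ₗ⋆[ℂ] A →ₗ[ℂ] ℂ)
    (hBperm : ∀ {d : ℕ} (x y : Fin d → V),
      B (∏ i, ι (x i)) (∏ i, ι (y i)) = permInner x y)
    (v : V) (a b : ℕ) (φ : A)
    (hφ : φ ∈ Submodule.span ℂ {x : A | ∃ u : Fin b → V, x = ∏ i, ι (u i)}) :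
    (B (ι v ^ a * φ) (ι v ^ a * φ)).re
      ≤ ((a + b).factorial / (a.factorial * b.factorial) : ℝ) *
          (B (ι v ^ a) (ι v ^ a)).re * (B φ φ).re := by
  have hmain := factorial_mul_re_apply_pow_mul_le hBperm v a hφ
  have hb : (0 : ℝ) < b.factorial := by positivity
  calc (B (ι v ^ a * φ) (ι v ^ a * φ)).re
      ≤ (a + b).factorial * (‖v‖ ^ 2) ^ a * (B φ φ).re / b.factorial := by
        rwa [le_div_iff₀' hb]
    _ = _ := by
        rw [re_apply_pow_self hBperm v a]
        field_simp
end

section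
/- If φ ∈ S^b V and v ∈ V with ‖v‖ = 1, writing φ in an orthonormal monomial basis extending v, one has ‖vφ‖² ≤ (b+1)·‖φ‖²; more generally, for arbitrary v ∈ V, ‖vφ‖² ≤ (b+1)·‖v‖²·‖φ‖². -/
/-!
Represent `φ = ∑ᵢ cᵢ • ∏ₖ ι (xᵢₖ)` and fix an orthonormal basis `e` of a finite-dimensional
subspace containing `v` and all `xᵢₖ`. Sending a family `x : Fin d → V` to the coordinates
`f ↦ ∑_π ∏ₖ ⟪e (f k), x (π k)⟫` of its symmetrized tensor, a vector of `ℓ²(Fin d → ι)`,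
multiplies the permanent inner product by `d!`. In these coordinates multiplication by `v` is a
sum over the `b + 1` insertion slots `p` of the operators
`Φ ↦ (f ↦ ⟪e (f p), v⟫ * Φ (f ∘ p.succAbove))`, each of norm `‖v‖` by Parseval. So
`(b + 1)! ‖vφ‖² ≤ ((b + 1) ‖v‖)² b! ‖φ‖²`.
-/

open scoped BigOperators ComplexConjugate

open Equiv Finset

section PermInner

variable {E : Type*} [NormedAddCommGroup E] [InnerProductSpace ℂ E] {d : ℕ}

lemma permInner_comp_perm (x y : Fin d → E) (π : Perm (Fin d)) :
    permInner (x ∘ π) y = permInner x y := by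
  unfold permInner
  calc ∑ σ : Perm (Fin d), ∏ k, inner ℂ (x (π k)) (y (σ k))
      = ∑ σ : Perm (Fin d), ∏ k, inner ℂ (x k) (y ((σ * π⁻¹) k)) := by
        refine sum_congr rfl fun σ _ => ?_
        rw [← Equiv.prod_comp π fun k => inner ℂ (x k) (y ((σ * π⁻¹) k))]
        simp [Perm.mul_apply]
    _ = ∑ σ : Perm (Fin d), ∏ k, inner ℂ (x k) (y (σ k)) :=
        Equiv.sum_comp (Equiv.mulRight π⁻¹) fun σ => ∏ k, inner ℂ (x k) (y (σ k))

lemma permInner_coe {W : Submodule ℂ E} (x y : Fin d → W) :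
    permInner (fun k => (x k : E)) (fun k => (y k : E)) = permInner x y := by
  simp only [permInner, Submodule.coe_inner]

end PermInner

section SymTensor

variable {E : Type*} [NormedAddCommGroup E] [InnerProductSpace ℂ E] {ι : Type*} [Fintype ι]
  {d : ℕ}

noncomputable def symTensor (e : OrthonormalBasis ι ℂ E) (x : Fin d → E) :
    EuclideanSpace ℂ (Fin d → ι) :=
  WithLp.toLp 2 fun f => ∑ π : Perm (Fin d), ∏ k, inner ℂ (e (f k)) (x (π k))

lemma inner_symTensor (e : OrthonormalBasis ι ℂ E) (x y : Fin d → E) :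
    inner ℂ (symTensor e x) (symTensor e y) = (d.factorial : ℂ) * permInner x y := by
  calc inner ℂ (symTensor e x) (symTensor e y)
      = ∑ π : Perm (Fin d), ∑ σ : Perm (Fin d), ∑ f : Fin d → ι,
          ∏ k, inner ℂ (x (π k)) (e (f k)) * inner ℂ (e (f k)) (y (σ k)) := by
        simp only [symTensor, PiLp.inner_apply, RCLike.inner_apply', map_sum,
          map_prod, inner_conj_symm, sum_mul_sum, ← prod_mul_distrib]
        rw [sum_comm]
        exact sum_congr rfl fun π _ => sum_comm
    _ = ∑ π : Perm (Fin d), permInner (x ∘ π) y := by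
        refine sum_congr rfl fun π _ => sum_congr rfl fun σ _ => ?_
        rw [← Fintype.prod_sum fun k i => inner ℂ (x (π k)) (e i) * inner ℂ (e i) (y (σ k))]
        simp only [e.sum_inner_mul_inner, Function.comp_apply]
    _ = (d.factorial : ℂ) * permInner x y := by
        simp [permInner_comp_perm, Fintype.card_perm]

end SymTensor

section PermSuccAbove

variable {d : ℕ}

def permOfSuccAbove (p : Fin (d + 1)) (σ : Perm (Fin d)) : Perm (Fin (d + 1)) :=
  (finSuccEquiv' p).trans (σ.optionCongr.trans (finSuccEquiv d).symm)

@[simp]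
lemma permOfSuccAbove_self (p : Fin (d + 1)) (σ : Perm (Fin d)) : permOfSuccAbove p σ p = 0 := by
  simp [permOfSuccAbove]

@[simp]
lemma permOfSuccAbove_succAbove (p : Fin (d + 1)) (σ : Perm (Fin d)) (j : Fin d) :
    permOfSuccAbove p σ (p.succAbove j) = (σ j).succ := by
  simp [permOfSuccAbove]

lemma permOfSuccAbove_injective :
    Function.Injective fun q : Fin (d + 1) × Perm (Fin d) => permOfSuccAbove q.1 q.2 := by
  rintro ⟨p, σ⟩ ⟨p', σ'⟩ h
  simp only at h
  obtain rfl : p = p' := (permOfSuccAbove p σ).injective <| by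
    rw [permOfSuccAbove_self, h, permOfSuccAbove_self]
  obtain rfl : σ = σ' := Equiv.ext fun j => Fin.succ_injective _ <| by
    rw [← permOfSuccAbove_succAbove p σ, h, permOfSuccAbove_succAbove]
  rfl

noncomputable def permSuccAboveEquiv : Fin (d + 1) × Perm (Fin d) ≃ Perm (Fin (d + 1)) :=
  Equiv.ofBijective _ <| (Fintype.bijective_iff_injective_and_card _).mpr
    ⟨permOfSuccAbove_injective, by simp [Fintype.card_perm, Nat.factorial_succ]⟩

end PermSuccAbove

section InsertFactor

variable {E : Type*} [NormedAddCommGroup E] [InnerProductSpace ℂ E] {ι : Type*} [Fintype ι]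
  {d : ℕ}

noncomputable def insertFactor (e : OrthonormalBasis ι ℂ E) (v : E) (p : Fin (d + 1)) :
    EuclideanSpace ℂ (Fin d → ι) →ₗ[ℂ] EuclideanSpace ℂ (Fin (d + 1) → ι) where
  toFun Φ := WithLp.toLp 2 fun f => inner ℂ (e (f p)) v * Φ (f ∘ p.succAbove)
  map_add' Φ Ψ := by ext f; simp [mul_add]
  map_smul' c Φ := by ext f; simp [mul_left_comm]

@[simp]
lemma insertFactor_apply (e : OrthonormalBasis ι ℂ E) (v : E) (p : Fin (d + 1))
    (Φ : EuclideanSpace ℂ (Fin d → ι)) (f : Fin (d + 1) → ι) :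
    insertFactor e v p Φ f = inner ℂ (e (f p)) v * Φ (f ∘ p.succAbove) := rfl

lemma norm_insertFactor (e : OrthonormalBasis ι ℂ E) (v : E) (p : Fin (d + 1))
    (Φ : EuclideanSpace ℂ (Fin d → ι)) : ‖insertFactor e v p Φ‖ = ‖v‖ * ‖Φ‖ := by
  refine (sq_eq_sq₀ (norm_nonneg _) (by positivity)).mp ?_
  rw [EuclideanSpace.norm_sq_eq, mul_pow, ← e.sum_sq_norm_inner_right, EuclideanSpace.norm_sq_eq,
    sum_mul_sum, ← (Fin.insertNthEquiv (fun _ => ι) p).sum_comp, Fintype.sum_prod_type]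
  simp [Function.comp_def, mul_pow]

lemma symTensor_cons (e : OrthonormalBasis ι ℂ E) (v : E) (x : Fin d → E) :
    symTensor e (Fin.cons v x) = ∑ p, insertFactor e v p (symTensor e x) := by
  ext f
  simp only [symTensor, WithLp.ofLp_sum, Finset.sum_apply, insertFactor_apply, WithLp.ofLp_toLp,
    mul_sum]
  rw [← permSuccAboveEquiv.sum_comp, Fintype.sum_prod_type]
  refine sum_congr rfl fun p _ => sum_congr rfl fun σ _ => ?_
  rw [Fin.prod_univ_succAbove _ p]
  simp [permSuccAboveEquiv]

end InsertFactor

lemma mul_sum_smul_prod {E A : Type*} [CommRing A] [Algebra ℂ A] (j : E → A) (v : E) {n d : ℕ}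
    (c : Fin n → ℂ) (x : Fin n → Fin d → E) :
    j v * ∑ i, c i • ∏ k, j (x i k)
      = ∑ i, c i • ∏ k, j ((Fin.cons v (x i) : Fin (d + 1) → E) k) := by
  simp [mul_sum, Fin.prod_univ_succ]

section Bound

variable {E : Type*} [NormedAddCommGroup E] [InnerProductSpace ℂ E] {ι : Type*} [Fintype ι]
  {A : Type*} [CommRing A] [Algebra ℂ A]

lemma factorial_mul_re_apply_eq_norm_sq (e : OrthonormalBasis ι ℂ E) (j : E → A)
    (B : A →ₗ⋆[ℂ] A →ₗ[ℂ] ℂ) {d : ℕ}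
    (hB : ∀ x y : Fin d → E, B (∏ i, j (x i)) (∏ i, j (y i)) = permInner x y)
    {n : ℕ} (c : Fin n → ℂ) (x : Fin n → Fin d → E) :
    (d.factorial : ℝ) * (B (∑ i, c i • ∏ k, j (x i k)) (∑ i, c i • ∏ k, j (x i k))).re
      = ‖∑ i, c i • symTensor e (x i)‖ ^ 2 := by
  have h : (d.factorial : ℂ) * B (∑ i, c i • ∏ k, j (x i k)) (∑ i, c i • ∏ k, j (x i k))
      = inner ℂ (∑ i, c i • symTensor e (x i)) (∑ i, c i • symTensor e (x i)) := by
    simp only [map_sum, map_smulₛₗ, LinearMap.sum_apply, LinearMap.smul_apply, hB, sum_inner,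
      inner_sum, inner_smul_left, inner_smul_right, inner_symTensor, smul_eq_mul, mul_sum,
      RingHom.id_apply]
    exact sum_congr rfl fun _ _ => sum_congr rfl fun _ _ => by ring
  simpa [← inner_self_eq_norm_sq (𝕜 := ℂ)] using congrArg Complex.re h

theorem re_apply_mul_le_of_orthonormalBasis (e : OrthonormalBasis ι ℂ E) (j : E → A)
    (B : A →ₗ⋆[ℂ] A →ₗ[ℂ] ℂ)
    (hB : ∀ {d : ℕ} (x y : Fin d → E), B (∏ i, j (x i)) (∏ i, j (y i)) = permInner x y)
    (v : E) {n b : ℕ} (c : Fin n → ℂ) (x : Fin n → Fin b → E) :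
    (B (j v * ∑ i, c i • ∏ k, j (x i k)) (j v * ∑ i, c i • ∏ k, j (x i k))).re
      ≤ (b + 1 : ℝ) * ‖v‖ ^ 2 * (B (∑ i, c i • ∏ k, j (x i k)) (∑ i, c i • ∏ k, j (x i k))).re := by
  set φ := ∑ i, c i • ∏ k, j (x i k)
  set Φ := ∑ i, c i • symTensor e (x i)
  have hφ : (b.factorial : ℝ) * (B φ φ).re = ‖Φ‖ ^ 2 :=
    factorial_mul_re_apply_eq_norm_sq e j B hB c x
  have hvφ : ((b + 1).factorial : ℝ) * (B (j v * φ) (j v * φ)).re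
      = ‖∑ p, insertFactor e v p Φ‖ ^ 2 := by
    have hcons : ∑ i, c i • symTensor e (Fin.cons v (x i)) = ∑ p, insertFactor e v p Φ := by
      simp only [Φ, symTensor_cons, smul_sum, map_sum, map_smul]
      exact sum_comm
    rw [mul_sum_smul_prod, ← hcons]
    exact factorial_mul_re_apply_eq_norm_sq e j B hB c fun i => Fin.cons v (x i)
  have hnorm : ‖∑ p, insertFactor e v p Φ‖ ≤ (b + 1) * (‖v‖ * ‖Φ‖) :=
    (norm_sum_le _ _).trans (by simp [norm_insertFactor])
  refine le_of_mul_le_mul_left ?_ (by positivity : (0 : ℝ) < (b + 1) * b.factorial)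
  calc (b + 1) * b.factorial * (B (j v * φ) (j v * φ)).re = ‖∑ p, insertFactor e v p Φ‖ ^ 2 := by
        rw [← hvφ]; push_cast [Nat.factorial_succ]; ring
    _ ≤ ((b + 1) * (‖v‖ * ‖Φ‖)) ^ 2 := by gcongr
    _ = (b + 1) * b.factorial * ((b + 1) * ‖v‖ ^ 2 * (B φ φ).re) := by
        rw [mul_pow, mul_pow, ← hφ]; ring

end Bound

/-- If `φ ∈ S^b V` (an element of the span of degree-`b` monomials in the symmetric algebra,
modelled by a commutative ℂ-algebra `A` with inclusion `ι : V →ₗ[ℂ] A` carrying the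
sesquilinear permanent inner product `B`), then for a unit vector `v`,
`‖vφ‖² ≤ (b+1)·‖φ‖²`, and more generally for arbitrary `v`,
`‖vφ‖² ≤ (b+1)·‖v‖²·‖φ‖²`. -/
theorem stmt9 {V : Type*} [NormedAddCommGroup V] [InnerProductSpace ℂ V]
    {A : Type*} [CommRing A] [Algebra ℂ A] (ι : V →ₗ[ℂ] A)
    (B : A →ₗ⋆[ℂ] A →ₗ[ℂ] ℂ)
    (hBperm : ∀ {d : ℕ} (x y : Fin d → V),
      B (∏ i, ι (x i)) (∏ i, ι (y i)) = permInner x y)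
    (v : V) (b : ℕ) (φ : A)
    (hφ : φ ∈ Submodule.span ℂ {x : A | ∃ u : Fin b → V, x = ∏ i, ι (u i)}) :
    (‖v‖ = 1 → (B (ι v * φ) (ι v * φ)).re ≤ (b + 1 : ℝ) * (B φ φ).re) ∧
      (B (ι v * φ) (ι v * φ)).re ≤ (b + 1 : ℝ) * ‖v‖ ^ 2 * (B φ φ).re := by
  obtain ⟨n, c, u, rfl⟩ := Submodule.mem_span_set'.mp hφ
  choose x hx using fun i => (u i).2
  simp only [hx]
  set W := Submodule.span ℂ (insert v (Set.range fun q : Fin n × Fin b => x q.1 q.2))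
  have : FiniteDimensional ℂ W :=
    FiniteDimensional.span_of_finite ℂ ((Set.finite_range _).insert v)
  have hbound := re_apply_mul_le_of_orthonormalBasis (stdOrthonormalBasis ℂ W) (fun w : W => ι w)
    B (fun x y => (hBperm _ _).trans (permInner_coe x y)) ⟨v, Submodule.subset_span (.inl rfl)⟩ c
    fun i k => ⟨x i k, Submodule.subset_span (.inr ⟨(i, k), rfl⟩)⟩
  exact ⟨fun hv => by simpa [hv] using hbound, hbound⟩
end

section
/- The only elements of the antidual SV' annihilated by all annihilation operators a(v), v ∈ V, are the scalar multiples of the vacuum functional <·|1>: if Φ ∈ SV' satisfies a(v)Φ = 0 for all v ∈ V, then Φ is proportional to <·|1>. -/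
open scoped BigOperators ComplexConjugate

/-!
An antilinear functional is determined by its values on the monomials `ι v₁ ⋯ ι v_d`, which span
`SV`. On a monomial of positive degree both sides vanish: `Φ` because the monomial is `ι v₁ · ψ`
and `a(v₁)Φ = 0`, and `⟨·|1⟩` because homogeneous components of different degrees are orthogonal.
On the empty monomial `1` they agree with `λ = Φ 1`, as `⟨1|1⟩ = 1`.
-/

theorem Submonoid.exists_fin_prod_of_mem_closure_range {M X : Type*} [CommMonoid M]
    {f : X → M} {a : M} (ha : a ∈ Submonoid.closure (Set.range f)) :
    ∃ (d : ℕ) (x : Fin d → X), ∏ i, f (x i) = a := by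
  induction ha using Submonoid.closure_induction with
  | mem a ha =>
    obtain ⟨v, rfl⟩ := ha
    exact ⟨1, fun _ => v, by simp⟩
  | one => exact ⟨0, Fin.elim0, by simp⟩
  | mul a b _ _ iha ihb =>
    obtain ⟨d, x, rfl⟩ := iha
    obtain ⟨e, y, rfl⟩ := ihb
    exact ⟨d + e, Fin.append x y, by simp [Fin.prod_univ_add]⟩

theorem Algebra.span_fin_prod_eq_top_of_adjoin_eq_top {R A X : Type*} [CommSemiring R]
    [CommSemiring A] [Algebra R A] {f : X → A} (h : Algebra.adjoin R (Set.range f) = ⊤) :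
    Submodule.span R {a | ∃ (d : ℕ) (x : Fin d → X), ∏ i, f (x i) = a} = ⊤ := by
  refine Submodule.eq_top_iff'.mpr fun a => ?_
  have ha : a ∈ Submodule.span R (Submonoid.closure (Set.range f) : Set A) := by
    rw [← Algebra.adjoin_eq_span, h]
    trivial
  exact Submodule.span_mono (fun b hb => Submonoid.exists_fin_prod_of_mem_closure_range hb) ha

/-- The elements of the antidual `SV'` killed by every annihilator are exactly the scalar
multiples of the vacuum functional `⟨·|1⟩`.  The symmetric algebra `SV` is modelled by a
commutative ℂ-algebra `A` generated by the image of `ι : V →ₗ[ℂ] A`, equipped with the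
sesquilinear permanent inner product `B` (with orthogonal homogeneous components), so that
the vacuum functional is `ψ ↦ B ψ 1`.  If the antilinear functional `Φ : A → ℂ` satisfies
`a(v)Φ = 0` for all `v ∈ V`, i.e. `Φ(ι v · ψ) = 0` for all `v, ψ`, then `Φ = λ·⟨·|1⟩` for
some scalar `λ ∈ ℂ`. -/
theorem stmt13 {V : Type*} [NormedAddCommGroup V] [InnerProductSpace ℂ V]
    {A : Type*} [CommRing A] [Algebra ℂ A] (ι : V →ₗ[ℂ] A)
    (hgen : Algebra.adjoin ℂ (Set.range ι) = ⊤)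
    (B : A →ₗ⋆[ℂ] A →ₗ[ℂ] ℂ)
    (hBperm : ∀ {d : ℕ} (x y : Fin d → V),
      B (∏ i, ι (x i)) (∏ i, ι (y i)) = permInner x y)
    (hBorth : ∀ {d e : ℕ}, d ≠ e → ∀ (x : Fin d → V) (y : Fin e → V),
      B (∏ i, ι (x i)) (∏ i, ι (y i)) = 0)
    (Φ : A → ℂ)
    (hadd : ∀ p q : A, Φ (p + q) = Φ p + Φ q)
    (hsmul : ∀ (c : ℂ) (p : A), Φ (c • p) = conj c * Φ p)
    (hkill : ∀ (v : V) (ψ : A), Φ (ι v * ψ) = 0) :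
    ∃ lam : ℂ, ∀ ψ : A, Φ ψ = lam * B ψ 1 := by
  let Φₗ : A →ₗ⋆[ℂ] ℂ := { toFun := Φ, map_add' := hadd, map_smul' := hsmul }
  have hB11 : B 1 1 = 1 := by simpa [permInner] using hBperm (d := 0) Fin.elim0 Fin.elim0
  have hΦ : Φₗ = Φ 1 • B.flip 1 := by
    refine LinearMap.ext_on (Algebra.span_fin_prod_eq_top_of_adjoin_eq_top hgen) ?_
    rintro _ ⟨d, x, rfl⟩
    cases d with
    | zero => simp [Φₗ, hB11]
    | succ n =>
      have hΦx : Φ (∏ i, ι (x i)) = 0 := by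
        rw [Fin.prod_univ_succ]
        exact hkill _ _
      have hBx : B (∏ i, ι (x i)) 1 = 0 := by
        simpa using hBorth n.succ_ne_zero x Fin.elim0
      simp [Φₗ, hΦx, hBx]
  exact ⟨Φ 1, fun ψ => LinearMap.congr_fun hΦ ψ⟩
end
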